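/- Let G be a complete multi-partite graph and H a complete graph. Then there exists a totally symmetric edge-coloring c of G with no rainbow copy of H using exactly ar(G, H) colors. -/

import Mathlib

/-!
Start from an extremal coloring and fix a representative `u` in each part. To clone `u` at another
vertex `w` of its part, give every edge `wz` the color of `uz`, except that each color saturated
by `u` is replaced by a fresh copy. A rainbow clique of the clone through `w` becomes one of the
original coloring through `u`, and the clone keeps every color not saturated by `w` while adding
`d^s(u)` fresh ones; extremality applied in both directions forces `d^s(u) = d^s(w)`, so the clone
is again extremal, and in it `u` and `w` are symmetric. Cloning preserves every symmetry already
present, so cloning each vertex from its representative in turn yields a totally symmetric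
extremal coloring.
-/

open Classical

noncomputable section

/-- A rainbow `k`-clique in the edge-colored graph `G^c`. -/
def HasRainbowClique {V : Type*} (G : SimpleGraph V) (c : Sym2 V → ℕ) (k : ℕ) : Prop :=
  ∃ S : Finset V, S.card = k ∧ (∀ x ∈ S, ∀ y ∈ S, x ≠ y → G.Adj x y) ∧
    ∀ x ∈ S, ∀ y ∈ S, ∀ z ∈ S, ∀ w ∈ S,
      x ≠ y → z ≠ w → c s(x, y) = c s(z, w) → s(x, y) = s(z, w)

/-- The number of colors used on the edges of `G`. -/
noncomputable def ncolors {V : Type*} (G : SimpleGraph V) (c : Sym2 V → ℕ) : ℕ :=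
  (c '' G.edgeSet).ncard

/-- The anti-Ramsey number `ar(G, K_k)`: the maximum number of colors of an
edge-coloring of `G` without a rainbow `K_k`. -/
noncomputable def antiRamsey {V : Type*} (G : SimpleGraph V) (k : ℕ) : ℕ :=
  sSup {m | ∃ c : Sym2 V → ℕ, ¬ HasRainbowClique G c k ∧ ncolors G c = m}

/-- A color `a` is saturated by the vertex `x`: some edge has color `a` and every
edge of color `a` is incident to `x`. -/
def Saturates {V : Type*} (G : SimpleGraph V) (c : Sym2 V → ℕ) (x : V) (a : ℕ) : Prop :=
  (∃ e ∈ G.edgeSet, c e = a) ∧ ∀ e ∈ G.edgeSet, c e = a → x ∈ e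

/-- The set of colors saturated by `x`. -/
def satColors {V : Type*} (G : SimpleGraph V) (c : Sym2 V → ℕ) (x : V) : Set ℕ :=
  {a | Saturates G c x a}

/-- The saturated color degree `d^s(x)`. -/
noncomputable def satDegree {V : Type*} (G : SimpleGraph V) (c : Sym2 V → ℕ) (x : V) : ℕ :=
  (satColors G c x).ncard

/-- The complete multipartite graph `K_{n 0, …, n (r-1)}` with partite sets
`U_i = {i} × Fin (n i)`. -/
def KMP (r : ℕ) (n : ℕ → ℕ) : SimpleGraph (Σ i : Fin r, Fin (n i)) :=
  SimpleGraph.completeMultipartiteGraph (fun i : Fin r => Fin (n i))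

/-- Two vertices `x, y` are symmetric in the edge-colored graph `G^c`. -/
def SymmetricVerts {V : Type*} (G : SimpleGraph V) (c : Sym2 V → ℕ) (x y : V) : Prop :=
  G.neighborSet x = G.neighborSet y ∧
  ∃ σ : ℕ → ℕ, Set.BijOn σ (satColors G c x) (satColors G c y) ∧
    ∀ z ∈ G.neighborSet x,
      (c s(x, z) ∉ satColors G c x → c s(y, z) = c s(x, z)) ∧
      (c s(x, z) ∈ satColors G c x → c s(y, z) = σ (c s(x, z)))

open Function Set

lemma Set.BijOn.sdiff_union_update {α β : Type*} [DecidableEq α] {f : α → β} {s : Set α}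
    {t : Set β} (h : BijOn f s t) {a a' : α} {b b' : β} {P Q : Prop}
    (hab : P → a ∈ s ∧ f a = b) (ha' : a' ∉ s) (hb' : b' ∉ t) :
    BijOn (update f a' b') (s \ {x | x = a ∧ P} ∪ {x | x = a' ∧ Q})
      (t \ {y | y = b ∧ P} ∪ {y | y = b' ∧ Q}) := by
  have hdiff : BijOn (update f a' b') (s \ {x | x = a ∧ P}) (t \ {y | y = b ∧ P}) := by
    refine BijOn.congr ?_ fun x hx => (update_of_ne (ne_of_mem_of_not_mem hx.1 ha') _ _).symm
    by_cases hP : P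
    · obtain ⟨ha, rfl⟩ := hab hP
      simpa [hP] using h.sdiff_singleton ha
    · simpa [hP] using h
  by_cases hQ : Q
  · simpa [hQ, union_singleton] using
      hdiff.insert (a := a') (by rw [update_self]; exact fun hb => hb' hb.1)
  · simpa [hQ] using hdiff

section Coloring

variable {V : Type*} {G : SimpleGraph V} {c : Sym2 V → ℕ}

def IsLoneEdge (G : SimpleGraph V) (c : Sym2 V → ℕ) (e : Sym2 V) : Prop :=
  ∀ e' ∈ G.edgeSet, c e' = c e → e' = e

lemma exists_adj_eq_mk_of_mem {x : V} {e : Sym2 V} (hx : x ∈ e) (he : e ∈ G.edgeSet) :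
    ∃ z, G.Adj x z ∧ e = s(x, z) := by
  refine ⟨Sym2.Mem.other hx, ?_, (Sym2.other_spec hx).symm⟩
  rwa [← G.mem_edgeSet, Sym2.other_spec hx]

lemma adj_of_neighborSet_eq {x y z : V} (hN : G.neighborSet x = G.neighborSet y)
    (h : G.Adj x z) : G.Adj y z := by
  rw [← G.mem_neighborSet, ← hN]; exact h

lemma satColors_subset_image (x : V) : satColors G c x ⊆ c '' G.edgeSet :=
  fun _ ha => ha.1

lemma notMem_satColors_of_notMem {x : V} {e : Sym2 V} (he : e ∈ G.edgeSet) (hx : x ∉ e) :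
    c e ∉ satColors G c x :=
  fun ha => hx (ha.2 e he rfl)

lemma notMem_satColors_of_adj {x y z : V} (hxz : G.Adj x z) (hyx : y ≠ x) (hyz : y ≠ z) :
    c s(x, z) ∉ satColors G c y :=
  notMem_satColors_of_notMem hxz (by simp [hyx, hyz])

lemma IsLoneEdge.mem_satColors {x z : V} (h : IsLoneEdge G c s(x, z)) (hxz : G.Adj x z) :
    c s(x, z) ∈ satColors G c x :=
  ⟨⟨_, hxz, rfl⟩, fun e he hce => h e he hce ▸ Sym2.mem_mk_left x z⟩

lemma IsLoneEdge.mem_satColors_right {x z : V} (h : IsLoneEdge G c s(x, z)) (hxz : G.Adj x z) :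
    c s(x, z) ∈ satColors G c z :=
  ⟨⟨_, hxz, rfl⟩, fun e he hce => h e he hce ▸ Sym2.mem_mk_right x z⟩

lemma isLoneEdge_of_mem_satColors {x z : V} {a : ℕ} (hxz : x ≠ z)
    (hx : a ∈ satColors G c x) (hz : a ∈ satColors G c z) :
    c s(x, z) = a ∧ IsLoneEdge G c s(x, z) := by
  have hmk : ∀ e ∈ G.edgeSet, c e = a → e = s(x, z) := fun e he hce =>
    (Sym2.mem_and_mem_iff hxz).1 ⟨hx.2 e he hce, hz.2 e he hce⟩
  obtain ⟨e₀, he₀, hce₀⟩ := hx.1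
  obtain rfl := hmk e₀ he₀ hce₀
  exact ⟨hce₀, fun e he hce => hmk e he (hce.trans hce₀)⟩

lemma exists_adj_ne_of_mem_satColors {x w : V} {a : ℕ} (ha : a ∈ satColors G c x)
    (hnl : ¬ (a = c s(x, w) ∧ IsLoneEdge G c s(x, w))) :
    ∃ z, G.Adj x z ∧ z ≠ w ∧ c s(x, z) = a := by
  by_cases haw : a = c s(x, w)
  · obtain ⟨e, he, hce, hne⟩ : ∃ e ∈ G.edgeSet, c e = c s(x, w) ∧ e ≠ s(x, w) := by
      by_contra! hl
      exact hnl ⟨haw, hl⟩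
    obtain ⟨z, hxz, rfl⟩ := exists_adj_eq_mk_of_mem (ha.2 e he (hce.trans haw.symm)) he
    exact ⟨z, hxz, fun h => hne (h ▸ rfl), hce.trans haw.symm⟩
  · obtain ⟨e, he, rfl⟩ := ha.1
    obtain ⟨z, hxz, rfl⟩ := exists_adj_eq_mk_of_mem (ha.2 _ he rfl) he
    exact ⟨z, hxz, fun h => haw (h ▸ rfl), rfl⟩

lemma image_edgeSet_subset_union_satColors (w : V) :
    c '' G.edgeSet ⊆ c '' {e | e ∈ G.edgeSet ∧ w ∉ e} ∪ satColors G c w := by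
  rintro a ⟨e, he, rfl⟩
  by_cases hall : ∀ e' ∈ G.edgeSet, c e' = c e → w ∈ e'
  · exact Or.inr ⟨⟨e, he, rfl⟩, hall⟩
  · push Not at hall
    obtain ⟨e', he', hce', hwe'⟩ := hall
    exact Or.inl ⟨e', ⟨he', hwe'⟩, hce'⟩

lemma SymmetricVerts.refl (c : Sym2 V → ℕ) (x : V) : SymmetricVerts G c x x :=
  ⟨rfl, id, bijOn_id _, fun _ _ => ⟨fun _ => rfl, fun _ => rfl⟩⟩

lemma SymmetricVerts.symm {x y : V} (h : SymmetricVerts G c x y) : SymmetricVerts G c y x := by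
  rcases eq_or_ne x y with rfl | hxy
  · exact h
  obtain ⟨hN, σ, hσ, hcol⟩ := h
  refine ⟨hN.symm, invFunOn σ (satColors G c x), BijOn.symm hσ.invOn_invFunOn.symm hσ, ?_⟩
  intro z hzy
  have hzx := adj_of_neighborSet_eq hN.symm hzy
  by_cases hs : c s(x, z) ∈ satColors G c x
  · have hyz := (hcol z hzx).2 hs
    exact ⟨fun hns => absurd (hyz ▸ hσ.mapsTo hs) hns,
      fun _ => by rw [hyz, hσ.injOn.leftInvOn_invFunOn hs]⟩
  · have hyz := (hcol z hzx).1 hs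
    exact ⟨fun _ => hyz.symm,
      fun hs' => absurd (hyz ▸ hs') (notMem_satColors_of_adj hzx hxy.symm hzy.ne)⟩

lemma SymmetricVerts.trans {x y z : V} (h₁ : SymmetricVerts G c x y)
    (h₂ : SymmetricVerts G c y z) : SymmetricVerts G c x z := by
  rcases eq_or_ne x y with rfl | hxy
  · exact h₂
  obtain ⟨hN₁, σ₁, hσ₁, hcol₁⟩ := h₁
  obtain ⟨hN₂, σ₂, hσ₂, hcol₂⟩ := h₂
  refine ⟨hN₁.trans hN₂, σ₂ ∘ σ₁, hσ₂.comp hσ₁, fun t hxt => ?_⟩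
  have hyt := adj_of_neighborSet_eq hN₁ hxt
  constructor
  · intro hns
    have e₁ := (hcol₁ t hxt).1 hns
    have hns' : c s(y, t) ∉ satColors G c y :=
      e₁ ▸ notMem_satColors_of_adj hxt hxy.symm hyt.ne
    rw [(hcol₂ t hyt).1 hns', e₁]
  · intro hs
    have e₁ := (hcol₁ t hxt).2 hs
    rw [(hcol₂ t hyt).2 (e₁ ▸ hσ₁.mapsTo hs), e₁, comp_apply]

def IsSymmetryMap (G : SimpleGraph V) (c : Sym2 V → ℕ) (x y : V) (σ : ℕ → ℕ) : Prop :=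
  BijOn σ (satColors G c x) (satColors G c y) ∧
    ∀ z, G.Adj x z → c s(y, z) =
      if c s(x, z) ∈ satColors G c x then σ (c s(x, z)) else c s(x, z)

lemma symmetricVerts_iff {x y : V} :
    SymmetricVerts G c x y ↔
      G.neighborSet x = G.neighborSet y ∧ ∃ σ, IsSymmetryMap G c x y σ := by
  refine ⟨fun ⟨hN, σ, hσ, hcol⟩ => ⟨hN, σ, hσ, fun z hz => ?_⟩,
    fun ⟨hN, σ, hσ, hcol⟩ => ⟨hN, σ, hσ, fun z hz =>
      ⟨fun h => by rw [hcol z hz, if_neg h], fun h => by rw [hcol z hz, if_pos h]⟩⟩⟩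
  split_ifs with h
  exacts [(hcol z hz).2 h, (hcol z hz).1 h]

lemma SymmetricVerts.isLoneEdge {u v : V} (h : SymmetricVerts G c u v) (huv : u ≠ v) {z : V}
    (huz : G.Adj u z) (hl : IsLoneEdge G c s(u, z)) : IsLoneEdge G c s(v, z) := by
  obtain ⟨hNuv, σ, hσ, hcol⟩ := h
  have hsat := hl.mem_satColors huz
  have hvz := (hcol z huz).2 hsat
  intro e he hce
  obtain ⟨t, hvt, rfl⟩ := exists_adj_eq_mk_of_mem ((hvz ▸ hσ.mapsTo hsat).2 e he hce) he
  have hut := adj_of_neighborSet_eq hNuv.symm hvt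
  by_cases hs : c s(u, t) ∈ satColors G c u
  · have := hσ.injOn hs hsat (((hcol t hut).2 hs).symm.trans (hce.trans hvz))
    rw [Sym2.congr_right.mp (hl _ hut this)]
  · have hvsat : c s(v, z) ∈ satColors G c v := hvz ▸ hσ.mapsTo hsat
    rw [← hce, (hcol t hut).1 hs] at hvsat
    exact absurd hvsat (notMem_satColors_of_adj hut huv.symm hvt.ne)

def IsRainbowClique (G : SimpleGraph V) (c : Sym2 V → ℕ) (S : Finset V) : Prop :=
  (∀ x ∈ S, ∀ y ∈ S, x ≠ y → G.Adj x y) ∧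
    ∀ x ∈ S, ∀ y ∈ S, ∀ z ∈ S, ∀ t ∈ S,
      x ≠ y → z ≠ t → c s(x, y) = c s(z, t) → s(x, y) = s(z, t)

lemma IsRainbowClique.image {c' : Sym2 V → ℕ} {S : Finset V} (h : IsRainbowClique G c' S)
    {f : V → V} (hadj : ∀ x ∈ S, ∀ y ∈ S, G.Adj x y → G.Adj (f x) (f y))
    (hcol : ∀ x ∈ S, ∀ y ∈ S, ∀ z ∈ S, ∀ t ∈ S, x ≠ y → z ≠ t →
      c s(f x, f y) = c s(f z, f t) → c' s(x, y) = c' s(z, t)) :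
    IsRainbowClique G c (S.image f) := by
  simp only [IsRainbowClique, Finset.forall_mem_image]
  refine ⟨fun x hx y hy hxy => hadj x hx y hy (h.1 x hx y hy (ne_of_apply_ne f hxy)),
    fun x hx y hy z hz t ht hxy hzt heq => ?_⟩
  have := h.2 x hx y hy z hz t ht (ne_of_apply_ne f hxy) (ne_of_apply_ne f hzt)
    (hcol x hx y hy z hz t ht (ne_of_apply_ne f hxy) (ne_of_apply_ne f hzt) heq)
  simpa using congrArg (Sym2.map f) this

lemma not_hasRainbowClique_const {m : ℕ} (hm : 3 ≤ m) (a : ℕ) :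
    ¬ HasRainbowClique G (fun _ => a) m := by
  rintro ⟨S, hS, -, hrb⟩
  obtain ⟨x, y, z, hx, hy, hz, hxy, hxz, hyz⟩ :=
    Finset.two_lt_card_iff.1 (by omega : 2 < S.card)
  exact hyz (Sym2.congr_right.mp (hrb x hx y hy x hx z hz hxy hxz rfl))

end Coloring

section Clone

variable {V : Type*} {G : SimpleGraph V} {c : Sym2 V → ℕ}

def freshColor (G : SimpleGraph V) (c : Sym2 V → ℕ) : ℕ := sSup (c '' G.edgeSet) + 1

def relabelSat (G : SimpleGraph V) (c : Sym2 V → ℕ) (u : V) (b : ℕ) : ℕ :=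
  if b ∈ satColors G c u then freshColor G c + b else b

def cloneColoring (G : SimpleGraph V) (c : Sym2 V → ℕ) (u w : V) (e : Sym2 V) : ℕ :=
  if h : w ∈ e then relabelSat G c u (c s(u, Sym2.Mem.other h)) else c e

lemma lt_freshColor [Finite V] {e : Sym2 V} (he : e ∈ G.edgeSet) : c e < freshColor G c :=
  Nat.lt_succ_of_le (le_csSup ((toFinite _).image c).bddAbove ⟨e, he, rfl⟩)

lemma lt_freshColor_of_mem_satColors [Finite V] {x : V} {a : ℕ}
    (ha : a ∈ satColors G c x) : a < freshColor G c := by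
  obtain ⟨e, he, rfl⟩ := ha.1
  exact lt_freshColor he

variable {u w : V} {b : ℕ}

lemma relabelSat_of_mem (hb : b ∈ satColors G c u) : relabelSat G c u b = freshColor G c + b :=
  if_pos hb

lemma relabelSat_of_notMem (hb : b ∉ satColors G c u) : relabelSat G c u b = b :=
  if_neg hb

lemma cloneColoring_of_notMem {e : Sym2 V} (hw : w ∉ e) : cloneColoring G c u w e = c e :=
  dif_neg hw

lemma cloneColoring_mk (z : V) :
    cloneColoring G c u w s(w, z) = relabelSat G c u (c s(u, z)) := by
  have h : w ∈ s(w, z) := Sym2.mem_mk_left w z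
  have hz : Sym2.Mem.other h = z := Sym2.congr_right.mp (Sym2.other_spec h)
  rw [cloneColoring, dif_pos h, hz]

lemma cloneColoring_mk_right (z : V) :
    cloneColoring G c u w s(z, w) = relabelSat G c u (c s(z, u)) := by
  rw [Sym2.eq_swap, cloneColoring_mk, Sym2.eq_swap]

lemma cloneColoring_eq_ite {x y : V} (hxy : x ≠ y) :
    cloneColoring G c u w s(x, y) =
      if w ∈ s(x, y) then relabelSat G c u (c s(update id w u x, update id w u y))
      else c s(x, y) := by
  by_cases hxw : x = w
  · subst hxw
    simp [cloneColoring_mk, update_of_ne hxy.symm]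
  by_cases hyw : y = w
  · subst hyw
    simp [Sym2.eq_swap (a := x), cloneColoring_mk, update_of_ne hxw]
  simp [cloneColoring_of_notMem, Ne.symm hxw, Ne.symm hyw]

lemma SimpleGraph.Adj.update_id (hN : G.neighborSet u = G.neighborSet w) {x y : V}
    (h : G.Adj x y) : G.Adj (update id w u x) (update id w u y) := by
  by_cases hxw : x = w <;> by_cases hyw : y = w
  · exact absurd (hxw.trans hyw.symm ▸ h) (G.irrefl)
  · rw [hxw, update_self, update_of_ne hyw]
    exact adj_of_neighborSet_eq hN.symm (hxw ▸ h)
  · rw [hyw, update_self, update_of_ne hxw]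
    exact (adj_of_neighborSet_eq hN.symm (hyw ▸ h.symm)).symm
  · rwa [update_of_ne hxw, update_of_ne hyw]

lemma not_hasRainbowClique_cloneColoring (hN : G.neighborSet u = G.neighborSet w) (huw : u ≠ w)
    {k : ℕ} (hc : ¬ HasRainbowClique G c k) :
    ¬ HasRainbowClique G (cloneColoring G c u w) k := by
  rintro ⟨S, hS, (hrc : IsRainbowClique G _ S)⟩
  have hnotboth : w ∈ S → u ∉ S := fun hw hu =>
    G.irrefl (adj_of_neighborSet_eq hN (hrc.1 u hu w hw huw))
  have hmemS : ∀ x ∈ S, ∀ y ∈ S, w ∈ s(x, y) → w ∈ S := fun x hx y hy h =>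
    (Sym2.mem_iff.1 h).elim (· ▸ hx) (· ▸ hy)
  -- moving `w` to `u` turns a rainbow clique of the clone into one of `c`
  refine hc ⟨S.image (update id w u), ?_, hrc.image (fun x _ y _ => (·.update_id hN)) ?_⟩
  · refine (Finset.card_image_of_injOn fun x hx y hy hxy => ?_).trans hS
    by_cases hxw : x = w <;> by_cases hyw : y = w <;>
      simp only [hxw, hyw, update_self, update_of_ne, id, ne_eq, not_false_eq_true] at hxy
    · exact hxw.trans hyw.symm
    · exact absurd (hxy ▸ hy) (hnotboth (hxw ▸ hx))
    · exact absurd (hxy ▸ hx) (hnotboth (hyw ▸ hy))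
    · exact hxy
  intro x hx y hy z hz t ht hxy hzt heq
  rw [cloneColoring_eq_ite hxy, cloneColoring_eq_ite hzt]
  have hfix : ∀ x y, w ∉ s(x, y) → s(update id w u x, update id w u y) = s(x, y) := by
    intro x y h
    simp only [Sym2.mem_iff, not_or] at h
    rw [update_of_ne (Ne.symm h.1), update_of_ne (Ne.symm h.2), id, id]
  have hunsat : ∀ x ∈ S, ∀ y ∈ S, x ≠ y → w ∈ S → c s(x, y) ∉ satColors G c u :=
    fun x hx y hy hxy hw => notMem_satColors_of_adj (hrc.1 x hx y hy hxy)
      (fun h => hnotboth hw (h ▸ hx)) (fun h => hnotboth hw (h ▸ hy))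
  split_ifs with h₁ h₂ h₂
  · rw [heq]
  · rw [heq, hfix z t h₂, relabelSat_of_notMem (hunsat z hz t ht hzt (hmemS x hx y hy h₁))]
  · rw [← heq, hfix x y h₁, relabelSat_of_notMem (hunsat x hx y hy hxy (hmemS z hz t ht h₂))]
  · rw [← hfix x y h₁, heq, hfix z t h₂]

end Clone

section Extremal

variable {V : Type*} [Finite V] {G : SimpleGraph V} {c : Sym2 V → ℕ} {u w : V}

lemma satColors_finite (x : V) : (satColors G c x).Finite :=
  ((toFinite G.edgeSet).image c).subset (satColors_subset_image x)

lemma ncolors_add_satDegree_le_cloneColoring (hN : G.neighborSet u = G.neighborSet w) :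
    ncolors G c + satDegree G c u ≤ ncolors G (cloneColoring G c u w) + satDegree G c w := by
  set A := c '' {e | e ∈ G.edgeSet ∧ w ∉ e}
  set F := (freshColor G c + ·) '' satColors G c u
  have hA : A.Finite := (toFinite _).image c
  have hnew : A ∪ F ⊆ cloneColoring G c u w '' G.edgeSet := by
    rintro a (⟨e, ⟨he, hwe⟩, rfl⟩ | ⟨b, hb, rfl⟩)
    · exact ⟨e, he, cloneColoring_of_notMem hwe⟩
    · obtain ⟨e, he, rfl⟩ := hb.1
      obtain ⟨z, huz, rfl⟩ := exists_adj_eq_mk_of_mem (hb.2 _ he rfl) he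
      exact ⟨s(w, z), adj_of_neighborSet_eq hN huz,
        by rw [cloneColoring_mk, relabelSat_of_mem hb]⟩
  have hdisj : Disjoint A F := by
    rw [disjoint_left]
    rintro _ ⟨e, ⟨he, -⟩, rfl⟩ ⟨b, -, hb⟩
    have := lt_freshColor (c := c) he
    simp only at hb
    omega
  have hF : F.ncard = satDegree G c u :=
    ncard_image_of_injective _ (add_right_injective _)
  calc ncolors G c + satDegree G c u
      ≤ (A ∪ satColors G c w).ncard + satDegree G c u := by
        gcongr
        exact ncard_le_ncard (image_edgeSet_subset_union_satColors w)
          (hA.union (satColors_finite w))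
    _ ≤ A.ncard + satDegree G c w + F.ncard := by
        rw [hF]; gcongr; exact ncard_union_le _ _
    _ = (A ∪ F).ncard + satDegree G c w := by
        rw [ncard_union_eq hdisj hA ((satColors_finite u).image _)]; ring
    _ ≤ ncolors G (cloneColoring G c u w) + satDegree G c w := by
        gcongr
        exact ncard_le_ncard hnew ((toFinite _).image _)

lemma ncolors_le_ncard_edgeSet (c : Sym2 V → ℕ) : ncolors G c ≤ G.edgeSet.ncard :=
  ncard_image_le (toFinite _)

lemma bddAbove_ncolors (P : (Sym2 V → ℕ) → Prop) :
    BddAbove {k | ∃ c, P c ∧ ncolors G c = k} :=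
  ⟨G.edgeSet.ncard, by rintro _ ⟨c, -, rfl⟩; exact ncolors_le_ncard_edgeSet c⟩

lemma ncolors_le_antiRamsey {m : ℕ} (hc : ¬ HasRainbowClique G c m) :
    ncolors G c ≤ antiRamsey G m :=
  le_csSup (bddAbove_ncolors _) ⟨c, hc, rfl⟩

def IsExtremal (G : SimpleGraph V) (m : ℕ) (c : Sym2 V → ℕ) : Prop :=
  ¬ HasRainbowClique G c m ∧ ncolors G c = antiRamsey G m

lemma exists_isExtremal {m : ℕ} (hm : 3 ≤ m) : ∃ c, IsExtremal G m c :=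
  Nat.sSup_mem (s := {k | ∃ c, ¬ HasRainbowClique G c m ∧ ncolors G c = k})
    ⟨_, fun _ => 0, not_hasRainbowClique_const hm 0, rfl⟩ (bddAbove_ncolors _)

lemma IsExtremal.satDegree_le {m : ℕ} (hc : IsExtremal G m c)
    (hN : G.neighborSet u = G.neighborSet w) (huw : u ≠ w) :
    satDegree G c u ≤ satDegree G c w := by
  have hcount := ncolors_add_satDegree_le_cloneColoring (c := c) hN
  have hle := ncolors_le_antiRamsey (not_hasRainbowClique_cloneColoring hN huw hc.1)
  have hex := hc.2
  omega

lemma IsExtremal.cloneColoring {m : ℕ} (hc : IsExtremal G m c)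
    (hN : G.neighborSet u = G.neighborSet w) (huw : u ≠ w) :
    IsExtremal G m (cloneColoring G c u w) := by
  have hrf := not_hasRainbowClique_cloneColoring hN huw hc.1
  refine ⟨hrf, le_antisymm (ncolors_le_antiRamsey hrf) ?_⟩
  have hcount := ncolors_add_satDegree_le_cloneColoring (c := c) hN
  have hle := hc.satDegree_le hN.symm huw.symm
  have hex := hc.2
  omega

end Extremal

section CloneSymmetry

variable {V : Type*} [Finite V] {G : SimpleGraph V} {c : Sym2 V → ℕ} {u v w : V}

lemma satColors_cloneColoring_of_symmetricVerts (hN : G.neighborSet u = G.neighborSet w)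
    (h : SymmetricVerts G c u v) (hvw : v ≠ w) :
    satColors G (cloneColoring G c u w) v = satColors G c v := by
  obtain ⟨hNuv, σ, hσ, hcol⟩ := h
  have hkeep : ∀ z, G.Adj v z → cloneColoring G c u w s(v, z) = c s(v, z) := fun z hz =>
    cloneColoring_of_notMem (by
      simp [hvw.symm, (adj_of_neighborSet_eq (hNuv.symm.trans hN) hz).ne])
  ext a
  constructor
  · intro ha
    obtain ⟨e, he, hca⟩ := ha.1
    obtain ⟨z, hvz, rfl⟩ := exists_adj_eq_mk_of_mem (ha.2 e he hca) he
    have huz := adj_of_neighborSet_eq hNuv.symm hvz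
    rw [hkeep z hvz] at hca
    by_contra hns
    have hu : c s(u, z) ∉ satColors G c u := fun hs =>
      hns (hca ▸ (hcol z huz).2 hs ▸ hσ.mapsTo hs)
    have hwz : cloneColoring G c u w s(w, z) = a := by
      rw [cloneColoring_mk, relabelSat_of_notMem hu, ← (hcol z huz).1 hu, hca]
    have := ha.2 _ (adj_of_neighborSet_eq hN huz) hwz
    simp only [Sym2.mem_iff, hvw, hvz.ne, false_or] at this
  · intro ha
    obtain ⟨e, he, hca⟩ := ha.1
    obtain ⟨z, hvz, rfl⟩ := exists_adj_eq_mk_of_mem (ha.2 e he hca) he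
    refine ⟨⟨s(v, z), hvz, (hkeep z hvz).trans hca⟩, fun e he hce => ?_⟩
    by_cases hwe : w ∈ e
    · exfalso
      obtain ⟨t, hwt, rfl⟩ := exists_adj_eq_mk_of_mem hwe he
      have hut := adj_of_neighborSet_eq hN.symm hwt
      rw [cloneColoring_mk] at hce
      by_cases hs : c s(u, t) ∈ satColors G c u
      · rw [relabelSat_of_mem hs] at hce
        have := lt_freshColor_of_mem_satColors ha
        omega
      · rw [relabelSat_of_notMem hs] at hce
        rcases Sym2.mem_iff.1 (ha.2 _ hut hce) with rfl | rfl
        · exact hs (hce ▸ ha)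
        · exact G.irrefl (adj_of_neighborSet_eq (hN.symm.trans hNuv) hwt)
    · rw [cloneColoring_of_notMem hwe] at hce
      exact ha.2 e he hce

lemma satColors_cloneColoring_target (hN : G.neighborSet u = G.neighborSet w) (huw : u ≠ w) :
    satColors G (cloneColoring G c u w) w = (freshColor G c + ·) '' satColors G c u := by
  ext a
  constructor
  · intro ha
    obtain ⟨e, he, hca⟩ := ha.1
    obtain ⟨z, hwz, rfl⟩ := exists_adj_eq_mk_of_mem (ha.2 e he hca) he
    have huz := adj_of_neighborSet_eq hN.symm hwz
    rw [cloneColoring_mk] at hca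
    by_cases hs : c s(u, z) ∈ satColors G c u
    · exact ⟨_, hs, (relabelSat_of_mem hs).symm.trans hca⟩
    · rw [relabelSat_of_notMem hs] at hca
      have hwuz : w ∉ s(u, z) := by simp [huw.symm, hwz.ne]
      exact absurd (ha.2 _ huz ((cloneColoring_of_notMem hwuz).trans hca)) hwuz
  · rintro ⟨b, hb, rfl⟩
    obtain ⟨e, he, rfl⟩ := hb.1
    obtain ⟨z, huz, rfl⟩ := exists_adj_eq_mk_of_mem (hb.2 _ he rfl) he
    refine ⟨⟨s(w, z), adj_of_neighborSet_eq hN huz, ?_⟩, fun e he hce => ?_⟩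
    · rw [cloneColoring_mk, relabelSat_of_mem hb]
    · by_contra hwe
      rw [cloneColoring_of_notMem hwe] at hce
      have := lt_freshColor (c := c) he
      simp only at hce
      omega

lemma symmetricVerts_cloneColoring (hN : G.neighborSet u = G.neighborSet w) (huw : u ≠ w) :
    SymmetricVerts G (cloneColoring G c u w) u w := by
  have hsat := satColors_cloneColoring_of_symmetricVerts hN (SymmetricVerts.refl c u) huw
  refine symmetricVerts_iff.2 ⟨hN, (freshColor G c + ·), ?_, fun z huz => ?_⟩
  · rw [hsat, satColors_cloneColoring_target hN huw]
    exact (add_right_injective _).injOn.bijOn_image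
  · have hwuz : w ∉ s(u, z) := by simp [huw.symm, (adj_of_neighborSet_eq hN huz).ne]
    rw [hsat, cloneColoring_of_notMem hwuz, cloneColoring_mk, relabelSat]

lemma SymmetricVerts.cloneColoring_of_neighborSet_eq (h : SymmetricVerts G c u v)
    (hN : G.neighborSet u = G.neighborSet w) (huw : u ≠ w) (hvw : v ≠ w) :
    SymmetricVerts G (cloneColoring G c u w) u v := by
  obtain ⟨hNuv, σ, hσ, hcol⟩ := h
  refine ⟨hNuv, σ, ?_, fun z huz => ?_⟩
  · rwa [satColors_cloneColoring_of_symmetricVerts hN (SymmetricVerts.refl c u) huw,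
      satColors_cloneColoring_of_symmetricVerts hN ⟨hNuv, σ, hσ, hcol⟩ hvw]
  · have hwz : w ≠ z := (adj_of_neighborSet_eq hN huz).ne
    rw [satColors_cloneColoring_of_symmetricVerts hN (SymmetricVerts.refl c u) huw,
      cloneColoring_of_notMem (by simp [huw.symm, hwz] : w ∉ s(u, z)),
      cloneColoring_of_notMem (by simp [hvw.symm, hwz] : w ∉ s(v, z))]
    exact hcol z huz

end CloneSymmetry

section CloneAcross

variable {V : Type*} {G : SimpleGraph V} {c : Sym2 V → ℕ} {u v u' w : V}

/-- The colors saturated by `u` once `w`, a neighbor of `u`, is made a clone of `u'`: the color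
of a lone edge `uw` disappears, and a lone edge `uu'` hands a fresh copy of its color to `uw`. -/
def clonedSatColors (G : SimpleGraph V) (c : Sym2 V → ℕ) (u u' w : V) : Set ℕ :=
  (satColors G c u \ {a | a = c s(u, w) ∧ IsLoneEdge G c s(u, w)}) ∪
    {a | a = freshColor G c + c s(u, u') ∧ IsLoneEdge G c s(u, u')}

lemma mem_satColors_cloneColoring_of_adj [Finite V] (hN : G.neighborSet u' = G.neighborSet w)
    (huw : G.Adj u w) {a : ℕ} (ha : a ∈ satColors G c u)
    (hnl : ¬ (a = c s(u, w) ∧ IsLoneEdge G c s(u, w))) :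
    a ∈ satColors G (cloneColoring G c u' w) u := by
  have huu' : G.Adj u u' := (adj_of_neighborSet_eq hN.symm huw.symm).symm
  obtain ⟨z, huz, hzw, rfl⟩ := exists_adj_ne_of_mem_satColors ha hnl
  refine ⟨⟨s(u, z), huz, cloneColoring_of_notMem (by simp [huw.ne', hzw.symm])⟩,
    fun e he hce => ?_⟩
  by_cases hwe : w ∈ e
  · obtain ⟨t, hwt, rfl⟩ := exists_adj_eq_mk_of_mem hwe he
    rw [cloneColoring_mk] at hce
    by_cases hs : c s(u', t) ∈ satColors G c u'
    · rw [relabelSat_of_mem hs] at hce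
      have := lt_freshColor_of_mem_satColors ha
      omega
    · rw [relabelSat_of_notMem hs] at hce
      rcases Sym2.mem_iff.1 (ha.2 _ (adj_of_neighborSet_eq hN.symm hwt) hce) with h | rfl
      · exact absurd h huu'.ne
      · exact Sym2.mem_mk_right _ _
  · exact ha.2 e he ((cloneColoring_of_notMem hwe).symm.trans hce)

lemma freshColor_add_mem_satColors_cloneColoring [Finite V]
    (hN : G.neighborSet u' = G.neighborSet w) (huw : G.Adj u w)
    (hl : IsLoneEdge G c s(u, u')) :
    freshColor G c + c s(u, u') ∈ satColors G (cloneColoring G c u' w) u := by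
  have huu' : G.Adj u u' := (adj_of_neighborSet_eq hN.symm huw.symm).symm
  have hs := hl.mem_satColors_right huu'
  refine ⟨⟨s(u, w), huw, by rw [cloneColoring_mk_right, relabelSat_of_mem hs]⟩,
    fun e he hce => ?_⟩
  by_cases hwe : w ∈ e
  · obtain ⟨t, hwt, rfl⟩ := exists_adj_eq_mk_of_mem hwe he
    have hu't := adj_of_neighborSet_eq hN.symm hwt
    rw [cloneColoring_mk] at hce
    by_cases hs' : c s(u', t) ∈ satColors G c u'
    · rw [relabelSat_of_mem hs'] at hce
      rcases Sym2.eq_iff.1 (hl _ hu't (by omega)) with ⟨h, -⟩ | ⟨-, rfl⟩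
      · exact absurd h.symm huu'.ne
      · exact Sym2.mem_mk_right _ _
    · rw [relabelSat_of_notMem hs'] at hce
      have := lt_freshColor (c := c) (e := s(u', t)) hu't
      omega
  · rw [cloneColoring_of_notMem hwe] at hce
    have := lt_freshColor (c := c) he
    omega

lemma subset_satColors_cloneColoring_of_adj [Finite V] (hN : G.neighborSet u' = G.neighborSet w)
    (huw : G.Adj u w) :
    clonedSatColors G c u u' w ⊆ satColors G (cloneColoring G c u' w) u := by
  rintro a (⟨ha, hnl⟩ | ⟨rfl, hl⟩)
  exacts [mem_satColors_cloneColoring_of_adj hN huw ha hnl,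
    freshColor_add_mem_satColors_cloneColoring hN huw hl]

lemma satColors_cloneColoring_subset_of_adj (h : SymmetricVerts G c u v) (huv : u ≠ v)
    (hN : G.neighborSet u' = G.neighborSet w) (hu'w : u' ≠ w) (huw : G.Adj u w) :
    satColors G (cloneColoring G c u' w) u ⊆ clonedSatColors G c u u' w := by
  obtain ⟨hNuv, σ, hσ, hcol⟩ := h
  have huu' : G.Adj u u' := (adj_of_neighborSet_eq hN.symm huw.symm).symm
  have hvw : G.Adj v w := adj_of_neighborSet_eq hNuv huw
  intro a ha
  have hold : ∀ z, G.Adj u z → z ≠ w → cloneColoring G c u' w s(u, z) = a →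
      a ∈ satColors G c u \ {a | a = c s(u, w) ∧ IsLoneEdge G c s(u, w)} := by
    intro z huz hzw hca
    rw [cloneColoring_of_notMem (by simp [huw.ne.symm, hzw.symm])] at hca
    have hsat : a ∈ satColors G c u := by
      by_contra hns
      have hvz : cloneColoring G c u' w s(v, z) = a := by
        rw [cloneColoring_of_notMem (by simp [hvw.ne.symm, hzw.symm]),
          (hcol z huz).1 (hca ▸ hns), hca]
      have := ha.2 _ (adj_of_neighborSet_eq hNuv huz) hvz
      simp [huv, huz.ne] at this
    exact ⟨hsat, fun ⟨hae, hl⟩ => hzw (Sym2.congr_right.mp (hl _ huz (hca.trans hae)))⟩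
  obtain ⟨e, he, hca⟩ := ha.1
  obtain ⟨z, huz, rfl⟩ := exists_adj_eq_mk_of_mem (ha.2 e he hca) he
  by_cases hzw : z ≠ w
  · exact Or.inl (hold z huz hzw hca)
  rw [not_not.1 hzw, cloneColoring_mk_right] at hca
  by_cases hs : c s(u, u') ∈ satColors G c u'
  · refine Or.inr ⟨hca.symm.trans (relabelSat_of_mem hs), fun e he hce => ?_⟩
    obtain ⟨t, hu't, rfl⟩ := exists_adj_eq_mk_of_mem (hs.2 e he hce) he
    have hwt : cloneColoring G c u' w s(w, t) = a := by rw [cloneColoring_mk, hce, ← hca]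
    rcases Sym2.mem_iff.1 (ha.2 _ (adj_of_neighborSet_eq hN hu't) hwt) with h | rfl
    · exact absurd h huw.ne
    · exact Sym2.eq_swap
  · rw [relabelSat_of_notMem hs] at hca
    exact Or.inl (hold u' huu' hu'w (by
      rw [cloneColoring_of_notMem (by simp [huw.ne.symm, hu'w.symm]), hca]))


lemma satColors_cloneColoring_of_adj [Finite V] (h : SymmetricVerts G c u v) (huv : u ≠ v)
    (hN : G.neighborSet u' = G.neighborSet w) (hu'w : u' ≠ w) (huw : G.Adj u w) :
    satColors G (cloneColoring G c u' w) u = clonedSatColors G c u u' w :=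
  (satColors_cloneColoring_subset_of_adj h huv hN hu'w huw).antisymm
    (subset_satColors_cloneColoring_of_adj hN huw)

lemma IsSymmetryMap.bijOn_cloneColoring_of_adj [Finite V] {σ : ℕ → ℕ}
    (hσ : IsSymmetryMap G c u v σ)
    (hNuv : G.neighborSet u = G.neighborSet v) (huv : u ≠ v)
    (hN : G.neighborSet u' = G.neighborSet w) (hu'w : u' ≠ w) (huw : G.Adj u w) :
    BijOn (update σ (freshColor G c + c s(u, u')) (freshColor G c + c s(v, u')))
      (satColors G (cloneColoring G c u' w) u) (satColors G (cloneColoring G c u' w) v) := by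
  have h : SymmetricVerts G c u v := symmetricVerts_iff.2 ⟨hNuv, σ, hσ⟩
  have hvw : G.Adj v w := adj_of_neighborSet_eq hNuv huw
  have huu' : G.Adj u u' := (adj_of_neighborSet_eq hN.symm huw.symm).symm
  have hvu' : G.Adj v u' := (adj_of_neighborSet_eq hN.symm hvw.symm).symm
  rw [satColors_cloneColoring_of_adj h huv hN hu'w huw,
    satColors_cloneColoring_of_adj h.symm huv.symm hN hu'w hvw, clonedSatColors, clonedSatColors,
    propext ⟨h.symm.isLoneEdge huv.symm hvw, h.isLoneEdge huv huw⟩,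
    propext ⟨h.symm.isLoneEdge huv.symm hvu', h.isLoneEdge huv huu'⟩]
  refine hσ.1.sdiff_union_update (fun hl => ⟨hl.mem_satColors huw, ?_⟩) (fun ha => ?_)
    fun hb => ?_
  · rw [hσ.2 w huw, if_pos (hl.mem_satColors huw)]
  · have := lt_freshColor_of_mem_satColors ha
    omega
  · have := lt_freshColor_of_mem_satColors hb
    omega

lemma IsSymmetryMap.cloneColoring_eq_ite_of_ne [Finite V] {σ : ℕ → ℕ}
    (hσ : IsSymmetryMap G c u v σ)
    (hvw : G.Adj v w) (huw : G.Adj u w) {z : V} (huz : G.Adj u z) (hzw : z ≠ w) :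
    cloneColoring G c u' w s(v, z) =
      if cloneColoring G c u' w s(u, z) ∈ clonedSatColors G c u u' w then
        update σ (freshColor G c + c s(u, u')) (freshColor G c + c s(v, u'))
          (cloneColoring G c u' w s(u, z))
      else cloneColoring G c u' w s(u, z) := by
  have hlt := lt_freshColor (c := c) (e := s(u, z)) huz
  rw [cloneColoring_of_notMem (e := s(u, z)) (by simp [huw.ne', hzw.symm]),
    cloneColoring_of_notMem (e := s(v, z)) (by simp [hvw.ne', hzw.symm]),
    update_of_ne (by omega), hσ.2 z huz]
  have hnl : ¬ (c s(u, z) = c s(u, w) ∧ IsLoneEdge G c s(u, w)) := fun ⟨he, hl⟩ =>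
    hzw (Sym2.congr_right.mp (hl _ huz he))
  by_cases hs : c s(u, z) ∈ satColors G c u
  · rw [if_pos hs, if_pos (show _ ∈ clonedSatColors G c u u' w from Or.inl ⟨hs, hnl⟩)]
  · rw [if_neg hs, if_neg]
    rintro (⟨h, -⟩ | ⟨h, -⟩)
    · exact hs h
    · omega

lemma IsSymmetryMap.cloneColoring_target_eq_ite [Finite V] {σ : ℕ → ℕ}
    (hσ : IsSymmetryMap G c u v σ)
    (h : SymmetricVerts G c u v) (huv : u ≠ v) (hN : G.neighborSet u' = G.neighborSet w)
    (hu'w : u' ≠ w) (huw : G.Adj u w) :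
    cloneColoring G c u' w s(v, w) =
      if cloneColoring G c u' w s(u, w) ∈ clonedSatColors G c u u' w then
        update σ (freshColor G c + c s(u, u')) (freshColor G c + c s(v, u'))
          (cloneColoring G c u' w s(u, w))
      else cloneColoring G c u' w s(u, w) := by
  have huu' : G.Adj u u' := (adj_of_neighborSet_eq hN.symm huw.symm).symm
  have hvu' : G.Adj v u' := adj_of_neighborSet_eq h.1 huu'
  have hlt := lt_freshColor (c := c) (e := s(u, u')) huu'
  rw [cloneColoring_mk_right, cloneColoring_mk_right, clonedSatColors]
  simp only [mem_union, mem_sdiff, mem_ofPred_eq]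
  by_cases hs : c s(u, u') ∈ satColors G c u'
  · rw [relabelSat_of_mem hs]
    by_cases hl : IsLoneEdge G c s(u, u')
    · rw [if_pos (Or.inr ⟨rfl, hl⟩), update_self,
        relabelSat_of_mem ((h.isLoneEdge huv huu' hl).mem_satColors_right hvu')]
    · have hnsu : c s(u, u') ∉ satColors G c u := fun h =>
        hl (isLoneEdge_of_mem_satColors huu'.ne h hs).2
      rw [if_neg, hσ.2 u' huu', if_neg hnsu, relabelSat_of_mem hs]
      rintro (⟨h, -⟩ | ⟨-, h⟩)
      · have := lt_freshColor_of_mem_satColors h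
        omega
      · exact hl h
  · rw [relabelSat_of_notMem hs, hσ.2 u' huu']
    by_cases hsu : c s(u, u') ∈ satColors G c u
    · have hnsv : σ (c s(u, u')) ∉ satColors G c u' := fun hsv => by
        have hl := isLoneEdge_of_mem_satColors hvu'.ne (hσ.1.mapsTo hsu)
          ((hσ.2 u' huu').trans (if_pos hsu) ▸ hsv) |>.2
        exact hs ((h.symm.isLoneEdge huv.symm hvu' hl).mem_satColors_right huu')
      rw [if_pos hsu,
        if_pos (Or.inl ⟨hsu, fun ⟨he, hl⟩ => hu'w (Sym2.congr_right.mp (hl _ huu' he))⟩),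
        update_of_ne (by omega), relabelSat_of_notMem hnsv]
    · rw [if_neg hsu, relabelSat_of_notMem hs, if_neg]
      rintro (⟨h, -⟩ | ⟨h, -⟩)
      · exact hsu h
      · omega

lemma SymmetricVerts.cloneColoring_of_adj [Finite V] (h : SymmetricVerts G c u v) (huv : u ≠ v)
    (hN : G.neighborSet u' = G.neighborSet w) (hu'w : u' ≠ w) (huw : G.Adj u w) :
    SymmetricVerts G (cloneColoring G c u' w) u v := by
  obtain ⟨hNuv, σ, hσ⟩ := symmetricVerts_iff.1 h
  refine symmetricVerts_iff.2
    ⟨hNuv, _, hσ.bijOn_cloneColoring_of_adj hNuv huv hN hu'w huw, fun z huz => ?_⟩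
  rw [satColors_cloneColoring_of_adj h huv hN hu'w huw]
  rcases eq_or_ne z w with rfl | hzw
  · exact hσ.cloneColoring_target_eq_ite h huv hN hu'w huw
  · exact hσ.cloneColoring_eq_ite_of_ne (adj_of_neighborSet_eq hNuv huw) huw huz hzw

end CloneAcross

section CompleteMultipartite

variable {r : ℕ} {n : ℕ → ℕ} {c : Sym2 (Σ i : Fin r, Fin (n i)) → ℕ}

lemma neighborSet_KMP_eq {x y : Σ i : Fin r, Fin (n i)} (h : x.1 = y.1) :
    (KMP r n).neighborSet x = (KMP r n).neighborSet y := by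
  ext z
  change x.1 ≠ z.1 ↔ y.1 ≠ z.1
  rw [h]

def partRep (x : Σ i : Fin r, Fin (n i)) : Σ i : Fin r, Fin (n i) := ⟨x.1, ⟨0, x.2.pos⟩⟩

lemma partRep_eq_partRep {x y : Σ i : Fin r, Fin (n i)} (h : x.1 = y.1) :
    partRep x = partRep y := by
  obtain ⟨i, p⟩ := x
  obtain ⟨j, q⟩ := y
  cases h
  rfl

lemma SymmetricVerts.partRep_cloneColoring {x w : Σ i : Fin r, Fin (n i)}
    (h : SymmetricVerts (KMP r n) c (partRep x) x) (hw : partRep w ≠ w) (hxw : x ≠ w) :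
    SymmetricVerts (KMP r n) (cloneColoring (KMP r n) c (partRep w) w) (partRep x) x := by
  have hN := neighborSet_KMP_eq (x := partRep w) (y := w) rfl
  by_cases hx : partRep x = x
  · rw [hx]
    exact SymmetricVerts.refl _ x
  by_cases hxw' : x.1 = w.1
  · rw [partRep_eq_partRep hxw'] at h ⊢
    exact h.cloneColoring_of_neighborSet_eq hN hw hxw
  · exact h.cloneColoring_of_adj hx hN hw hxw'

lemma IsExtremal.exists_forall_symmetricVerts_partRep {m : ℕ}
    (T : Finset (Σ i : Fin r, Fin (n i))) (hc : IsExtremal (KMP r n) m c)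
    (hT : ∀ x ∉ T, SymmetricVerts (KMP r n) c (partRep x) x) :
    ∃ c', IsExtremal (KMP r n) m c' ∧ ∀ x, SymmetricVerts (KMP r n) c' (partRep x) x := by
  induction T using Finset.induction_on generalizing c with
  | empty => exact ⟨c, hc, fun x => hT x (Finset.notMem_empty x)⟩
  | insert w T _ ih =>
    by_cases hw : partRep w = w
    · refine ih hc fun x hx => ?_
      by_cases hxw : x = w
      · rw [hxw, hw]
        exact SymmetricVerts.refl c w
      · exact hT x (by simp [hxw, hx])
    have hN := neighborSet_KMP_eq (x := partRep w) (y := w) rfl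
    refine ih (hc.cloneColoring hN hw) fun x hx => ?_
    by_cases hxw : x = w
    · rw [hxw]
      exact symmetricVerts_cloneColoring hN hw
    · exact (hT x (by simp [hxw, hx])).partRep_cloneColoring hw hxw

end CompleteMultipartite

/-- There is a totally symmetric extremal coloring for `ar(G, K_m)` for any complete
multipartite graph `G` and complete graph `K_m` (`m ≥ 3`). -/
theorem exists_totally_symmetric_extremal (r : ℕ) (n : ℕ → ℕ) (m : ℕ) (hm : 3 ≤ m) :
    ∃ c : Sym2 (Σ i : Fin r, Fin (n i)) → ℕ,
      (∀ x y : Σ i : Fin r, Fin (n i), x.1 = y.1 → SymmetricVerts (KMP r n) c x y) ∧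
      ¬ HasRainbowClique (KMP r n) c m ∧
      ncolors (KMP r n) c = antiRamsey (KMP r n) m := by
  obtain ⟨c₀, hc₀⟩ := exists_isExtremal (G := KMP r n) hm
  obtain ⟨c, hc, hrep⟩ := hc₀.exists_forall_symmetricVerts_partRep Finset.univ (by simp)
  refine ⟨c, fun x y hxy => (hrep x).symm.trans ?_, hc⟩
  rw [partRep_eq_partRep hxy]
  exact hrep y
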